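/- arXiv:1406.1868 — 3 statements merged into one kernel-verified Lean document; each statement's English description precedes it below -/
import Mathlib

section
/- Let 1 < α < 2, λ ≥ 0, h > 0, and let r_1 = α/2 + r_3, r_2 = (2-α)/2 - 2r_3 where r_3 satisfies -α(α-1)(α+2)/(2(α²+3α+4)) ≤ r_3. Define ω_0^α = r_1, ω_2^α = r_1 g_2^α + r_2 g_1^α + r_3, with g_j^α = (-1)^j binomial(α,j). Then e^{λh} ω_0^α + e^{-λh} ω_2^α ≥ 0. -/
/-- Generalized binomial coefficient `binomial(x, k) = x(x-1)⋯(x-k+1)/k!`. -/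
noncomputable def genBinom (x : ℝ) (k : ℕ) : ℝ :=
  (∏ i ∈ Finset.range k, (x - i)) / (Nat.factorial k)

/-- Grünwald coefficients `g_j^α = (-1)^j binomial(α, j)`. -/
noncomputable def g (x : ℝ) (j : ℕ) : ℝ := (-1 : ℝ) ^ j * genBinom x j

theorem stmt8 (α lam h r3 : ℝ) (hα1 : 1 < α) (hα2 : α < 2)
    (hlam : 0 ≤ lam) (hh : 0 < h)
    (hr3 : -(α * (α - 1) * (α + 2)) / (2 * (α ^ 2 + 3 * α + 4)) ≤ r3) :
    0 ≤ Real.exp (lam * h) * (α / 2 + r3) +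
        Real.exp (-(lam * h)) *
          ((α / 2 + r3) * g α 2 + ((2 - α) / 2 - 2 * r3) * g α 1 + r3) := by
  have hg1 : g α 1 = -α := by
    simp [g, genBinom, Finset.prod_range_succ, Nat.factorial]
  have hg2 : g α 2 = α * (α - 1) / 2 := by
    simp [g, genBinom, Finset.prod_range_succ, Nat.factorial]
  rw [hg1, hg2]
  have hd : (0:ℝ) < 2 * (α ^ 2 + 3 * α + 4) := by nlinarith
  have hr3' : -(α * (α - 1) * (α + 2)) ≤ r3 * (2 * (α ^ 2 + 3 * α + 4)) :=
    (div_le_iff₀ hd).mp hr3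
  have hω0 : 0 ≤ α / 2 + r3 := by nlinarith
  have hsum : 0 ≤ (α / 2 + r3) +
      ((α / 2 + r3) * (α * (α - 1) / 2) + ((2 - α) / 2 - 2 * r3) * (-α) + r3) := by
    nlinarith
  have hE : Real.exp (-(lam * h)) ≤ Real.exp (lam * h) :=
    Real.exp_le_exp.2 (by nlinarith)
  have hEpos : (0:ℝ) < Real.exp (-(lam * h)) := Real.exp_pos _
  nlinarith [mul_nonneg (sub_nonneg.2 hE) hω0, mul_nonneg hEpos.le hsum]
end

section
/- Let 1 < α < 2, j ≥ 4, r_1 = α/2 + r_3, r_2 = (2-α)/2 - 2r_3, and suppose r_3 ≥ -(2-α)(8-α²-α)/(2(α+1)(α+2)). Then ω_j^α := r_1 g_j^α + r_2 g_{j-1}^α + r_3 g_{j-2}^α ≥ 0, where g_j^α = (-1)^j binomial(α,j). -/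
lemma gsucc (x : ℝ) (k : ℕ) :
    g x (k + 1) = g x k * ((k : ℝ) - x) / ((k : ℝ) + 1) := by
  have hk : ((k : ℝ) + 1) ≠ 0 := by positivity
  have hf : ((Nat.factorial k : ℝ)) ≠ 0 := by
    exact_mod_cast Nat.factorial_ne_zero k
  simp only [g, genBinom, Finset.prod_range_succ, Nat.factorial_succ, pow_succ]
  push_cast
  field_simp
  ring

lemma gpos (α : ℝ) (hα1 : 1 < α) (hα2 : α < 2) :
    ∀ n, 2 ≤ n → 0 < g α n := by
  intro n hn
  induction n, hn using Nat.le_induction with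
  | base =>
    have : g α 2 = α * (α - 1) / 2 := by
      simp [g, genBinom, Finset.prod_range_succ, Nat.factorial]
    rw [this]
    nlinarith
  | succ n hn ih =>
    rw [gsucc]
    have h1 : (0:ℝ) < (n : ℝ) - α := by
      have : (2:ℝ) ≤ (n:ℝ) := by exact_mod_cast hn
      linarith
    have h2 : (0:ℝ) < (n : ℝ) + 1 := by positivity
    positivity

theorem stmt11 (α r3 : ℝ) (hα1 : 1 < α) (hα2 : α < 2) (j : ℕ) (hj : 4 ≤ j)
    (hr3 : -((2 - α) * (8 - α ^ 2 - α)) / (2 * (α + 1) * (α + 2)) ≤ r3) :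
    0 ≤ (α / 2 + r3) * g α j + ((2 - α) / 2 - 2 * r3) * g α (j - 1) + r3 * g α (j - 2) := by
  obtain ⟨n, hn2, rfl⟩ : ∃ n, 2 ≤ n ∧ j = n + 2 := ⟨j - 2, by omega, by omega⟩
  have e1 : n + 2 - 1 = n + 1 := by omega
  have e2 : n + 2 - 2 = n := by omega
  rw [e1, e2]
  set t : ℝ := (n : ℝ) with ht
  have htt : (2:ℝ) ≤ t := by rw [ht]; exact_mod_cast hn2
  have h1 : g α (n + 1) = g α n * (t - α) / (t + 1) := gsucc α n
  have h2 : g α (n + 2) = g α (n + 1) * (t + 1 - α) / (t + 2) := by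
    have := gsucc α (n + 1)
    push_cast at this
    convert this using 2 <;> ring
  have hgpos : 0 < g α n := gpos α hα1 hα2 n hn2
  have hd : (0:ℝ) < 2 * (α + 1) * (α + 2) := by nlinarith
  have hr3' : -((2 - α) * (8 - α ^ 2 - α)) ≤ r3 * (2 * (α + 1) * (α + 2)) :=
    (div_le_iff₀ hd).mp hr3
  have haux : (0:ℝ) ≤ (t - 2) * (2 * t + 8 - α ^ 2 - 3 * α) := by
    apply mul_nonneg <;> nlinarith
  have key : 0 ≤ (α / 2 + r3) * ((t - α) * (t + 1 - α))
      + ((2 - α) / 2 - 2 * r3) * ((t - α) * (t + 2)) + r3 * ((t + 1) * (t + 2)) := by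
    nlinarith [hr3', haux]
  have h3 : (α / 2 + r3) * g α (n + 2) + ((2 - α) / 2 - 2 * r3) * g α (n + 1) + r3 * g α n
      = g α n * ((α / 2 + r3) * ((t - α) * (t + 1 - α))
        + ((2 - α) / 2 - 2 * r3) * ((t - α) * (t + 2)) + r3 * ((t + 1) * (t + 2)))
        / ((t + 1) * (t + 2)) := by
    rw [h2, h1]
    have ha : (t + 1) ≠ 0 := by positivity
    have hb : (t + 2) ≠ 0 := by positivity
    field_simp
  rw [h3]
  apply div_nonneg (mul_nonneg hgpos.le key)
  positivity
end

section
/- Let λ ≥ 0, h > 0, 1 < α < 2, and with g_j^α = (-1)^j binomial(α,j) and weights ω_j^α defined by ω_0^α = r_1 g_0^α, ω_1^α = r_1 g_1^α + r_2 g_0^α - (r_1 e^{λh}+r_2+r_3 e^{-λh})(1-e^{-λh})^α, ω_j^α = r_1 g_j^α + r_2 g_{j-1}^α + r_3 g_{j-2}^α for j ≥ 2, where r_1 = α/2+r_3, r_2 = (2-α)/2-2r_3. Then ∑_{j=0}^{∞} e^{-(j-1)λh} ω_j^α = 0. -/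
open Finset Filter Topology

theorem genBinom_eq_choose (x : ℝ) (k : ℕ) : genBinom x k = Ring.choose x k := by
  rw [Ring.choose_eq_smul, ← Polynomial.aeval_eq_smeval, Polynomial.aeval_def,
    Polynomial.eval₂_eq_eval_map, descPochhammer_map, descPochhammer_eval_eq_prod_range, genBinom,
    smul_eq_mul, inv_mul_eq_div]

theorem genBinom_succ (x : ℝ) (k : ℕ) :
    genBinom x (k + 1) = genBinom x k * (x - k) / (k + 1) := by
  simp only [genBinom, prod_range_succ, Nat.factorial_succ, Nat.cast_mul, Nat.cast_succ]
  field_simp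

theorem g_succ (x : ℝ) (k : ℕ) : g x (k + 1) = g x k * (k - x) / (k + 1) := by
  rw [g, g, genBinom_succ, pow_succ]
  ring

theorem hasSum_g_mul_pow (a : ℝ) {x : ℝ} (hx : |x| < 1) :
    HasSum (fun n => g a n * x ^ n) ((1 - x) ^ a) := by
  have hx' : -x ∈ Metric.eball (0 : ℝ) 1 := by
    simpa [enorm_eq_nnnorm, ← NNReal.coe_lt_one] using hx
  have hbinom := (Real.one_add_rpow_hasFPowerSeriesOnBall_zero (a := a)).hasSum hx'
  rw [zero_add, ← sub_eq_add_neg] at hbinom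
  have hterm : ∀ n, binomialSeries ℝ a n (fun _ => -x) = g a n * x ^ n := by
    intro n
    rw [binomialSeries_apply, List.ofFn_const, List.prod_replicate, g, genBinom_eq_choose,
      smul_eq_mul, neg_pow]
    ring
  simpa only [hterm] using hbinom

theorem sum_range_succ_g (a : ℝ) (N : ℕ) :
    ∑ k ∈ range (N + 1), g a k = (-1) ^ N * genBinom (a - 1) N := by
  induction N with
  | zero => simp [g, genBinom]
  | succ N ih =>
    have pascal := Ring.choose_succ_succ (a - 1) N
    simp only [sub_add_cancel, ← genBinom_eq_choose] at pascal
    rw [sum_range_succ, ih, g, pascal, pow_succ]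
    ring

theorem abs_genBinom_succ_le {b : ℝ} (hb₀ : 0 ≤ b) (hb₁ : b ≤ 1) (N : ℕ) :
    |genBinom b (N + 1)| ≤ b / (N + 1) := by
  induction N with
  | zero => simp [genBinom, abs_of_nonneg hb₀]
  | succ N ih =>
    have hN : (0 : ℝ) ≤ N := N.cast_nonneg
    rw [genBinom_succ]
    push_cast
    rw [abs_div, abs_mul, abs_of_nonpos (by linarith : b - (N + 1) ≤ 0),
      abs_of_pos (by positivity : (0 : ℝ) < N + 1 + 1), div_le_div_iff_of_pos_right (by positivity)]
    calc |genBinom b (N + 1)| * -(b - (N + 1)) ≤ b / (N + 1) * (N + 1) := by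
          gcongr <;> linarith
      _ = b := div_mul_cancel₀ b (by positivity)

theorem g_add_two_nonneg {a : ℝ} (ha₁ : 1 ≤ a) (ha₂ : a ≤ 2) (n : ℕ) : 0 ≤ g a (n + 2) := by
  induction n with
  | zero =>
    have hg₂ : g a 2 = a * (a - 1) / 2 := by
      rw [g_succ, g_succ]
      simp [g, genBinom]
      ring
    rw [hg₂]
    have : 0 ≤ a - 1 := by linarith
    positivity
  | succ n ih =>
    rw [g_succ]
    have : 0 ≤ ((n + 2 : ℕ) : ℝ) - a := by push_cast; linarith [n.cast_nonneg (α := ℝ)]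
    positivity

theorem tendsto_sum_range_g {a : ℝ} (ha₁ : 1 ≤ a) (ha₂ : a ≤ 2) :
    Tendsto (fun N => ∑ k ∈ range N, g a k) atTop (𝓝 0) := by
  rw [← tendsto_add_atTop_iff_nat 1]
  simp only [sum_range_succ_g]
  refine squeeze_zero_norm' ?_ (tendsto_const_div_atTop_nhds_zero_nat (a - 1))
  filter_upwards [eventually_ge_atTop 1] with N hN
  obtain ⟨M, rfl⟩ := Nat.exists_eq_add_of_le' hN
  rw [norm_mul, norm_pow, norm_neg, norm_one, one_pow, one_mul, Real.norm_eq_abs]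
  exact_mod_cast abs_genBinom_succ_le (by linarith) (by linarith) M

theorem hasSum_g {a : ℝ} (ha₁ : 1 ≤ a) (ha₂ : a ≤ 2) : HasSum (g a) 0 := by
  refine (hasSum_nat_add_iff' 2).mp ?_
  rw [hasSum_iff_tendsto_nat_of_nonneg (g_add_two_nonneg ha₁ ha₂)]
  refine (((tendsto_sum_range_g ha₁ ha₂).comp (tendsto_add_atTop_nat 2)).sub_const
    (∑ i ∈ range 2, g a i)).congr fun N => ?_
  rw [Function.comp_apply, add_comm N 2, sum_range_add, add_sub_cancel_left]
  simp only [add_comm]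

theorem hasSum_g_mul_pow_of_le_one {a : ℝ} (ha₁ : 1 ≤ a) (ha₂ : a ≤ 2) {x : ℝ} (hx₀ : -1 < x)
    (hx₁ : x ≤ 1) : HasSum (fun n => g a n * x ^ n) ((1 - x) ^ a) := by
  rcases hx₁.lt_or_eq with hx₁ | rfl
  · exact hasSum_g_mul_pow a (abs_lt.mpr ⟨hx₀, hx₁⟩)
  · simpa [Real.zero_rpow (by linarith : a ≠ 0)] using hasSum_g ha₁ ha₂

theorem hasSum_pow_mul_of_weights {c w : ℕ → ℝ} {x G r₁ r₂ r₃ : ℝ} (hx : x ≠ 0)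
    (hc : HasSum (fun n => c n * x ^ n) G) (hw0 : w 0 = r₁ * c 0)
    (hw1 : w 1 = r₁ * c 1 + r₂ * c 0 - (r₁ * x⁻¹ + r₂ + r₃ * x) * G)
    (hwj : ∀ j, 2 ≤ j → w j = r₁ * c j + r₂ * c (j - 1) + r₃ * c (j - 2)) :
    HasSum (fun j => x ^ j * w j) 0 := by
  have hc₁ := (hasSum_nat_add_iff' 1).mpr hc
  have hc₂ := (hasSum_nat_add_iff' 2).mpr hc
  have htail :=
    (hc₂.const_smul r₁).add ((hc₁.const_smul (r₂ * x)).add (hc.const_smul (r₃ * x ^ 2)))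
  refine (hasSum_nat_add_iff' 2).mp ?_
  convert htail using 2 with n
  · rw [hwj (n + 2) (by omega), Nat.add_sub_cancel, show n + 2 - 1 = n + 1 by omega]
    simp only [smul_eq_mul]
    ring
  · simp only [sum_range_succ, sum_range_zero, hw0, hw1, smul_eq_mul]
    field_simp
    ring

theorem stmt13 (α lam h r3 : ℝ) (hα1 : 1 < α) (hα2 : α < 2)
    (hlam : 0 ≤ lam) (hh : 0 < h)
    (w : ℕ → ℝ)
    (hw0 : w 0 = (α / 2 + r3) * g α 0)
    (hw1 : w 1 = (α / 2 + r3) * g α 1 + ((2 - α) / 2 - 2 * r3) * g α 0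
      - ((α / 2 + r3) * Real.exp (lam * h) + ((2 - α) / 2 - 2 * r3)
          + r3 * Real.exp (-(lam * h))) * (1 - Real.exp (-(lam * h))) ^ α)
    (hwj : ∀ j, 2 ≤ j →
      w j = (α / 2 + r3) * g α j + ((2 - α) / 2 - 2 * r3) * g α (j - 1) + r3 * g α (j - 2)) :
    HasSum (fun j : ℕ => Real.exp (-((j : ℝ) - 1) * lam * h) * w j) 0 := by
  set E := Real.exp (-(lam * h))
  have hE₀ : 0 < E := Real.exp_pos _
  have hE₁ : E ≤ 1 := Real.exp_le_one_iff.mpr (neg_nonpos.mpr (mul_nonneg hlam hh.le))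
  have hexp : ∀ j : ℕ, Real.exp (-((j : ℝ) - 1) * lam * h) = E ^ j * E⁻¹ := by
    intro j
    rw [← Real.exp_nat_mul, ← Real.exp_neg, ← Real.exp_add]
    ring_nf
  rw [← inv_inv (Real.exp (lam * h)), ← Real.exp_neg] at hw1
  have hG := hasSum_g_mul_pow_of_le_one hα1.le hα2.le (by linarith) hE₁
  have hsum := (hasSum_pow_mul_of_weights hE₀.ne' hG hw0 hw1 hwj).mul_right E⁻¹
  rw [zero_mul] at hsum
  exact hsum.congr_fun fun j => by rw [hexp, mul_right_comm]
end
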